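/- arXiv:1211.5209 — 6 statements merged into one kernel-verified Lean document; each statement's English description precedes it below -/
import Mathlib

section
/- Let ⟨⊏ₙ⟩_{n<ω} be an increasing (with respect to inclusion) sequence of binary relations on the Baire space ω^ω such that each ⊏ₙ is closed as a subset of ω^ω × ω^ω and, for every n < ω and every g ∈ ω^ω, the vertical section {f ∈ ω^ω : f ⊏ₙ g} is nowhere dense. Let ⊏ = ⋃_{n<ω} ⊏ₙ. Then every non-meager subset of ω^ω is a ⊏-unbounded family; consequently the least cardinality b_⊏ of a ⊏-unbounded family satisfies b_⊏ ≤ non(M), where non(M) is the least cardinality of a non-meager subset of ω^ω. -/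
open Cardinal Set

theorem isMeagre_setOf_mem_iUnion {ι X Y : Type*} [Countable ι] [TopologicalSpace X]
    (r : ι → Set (X × Y)) (g : Y) (hnwd : ∀ n, IsNowhereDense {f : X | (f, g) ∈ r n}) :
    IsMeagre {f : X | (f, g) ∈ ⋃ n, r n} := by
  simpa only [mem_iUnion, ofPred_exists] using isMeagre_iUnion fun n => (hnwd n).isMeagre

theorem exists_mem_notMem_iUnion_of_not_isMeagre {ι X Y : Type*} [Countable ι]
    [TopologicalSpace X] {r : ι → Set (X × Y)}
    (hnwd : ∀ n g, IsNowhereDense {f : X | (f, g) ∈ r n}) {F : Set X} (hF : ¬ IsMeagre F)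
    (g : Y) : ∃ f ∈ F, (f, g) ∉ ⋃ n, r n :=
  not_subset.mp fun hsub => hF ((isMeagre_setOf_mem_iUnion r g (hnwd · g)).mono hsub)

theorem sInf_mk_le_sInf_mk_of_imp {α : Type*} {P Q : Set α → Prop} (hPQ : ∀ S, P S → Q S)
    (hP : ∃ S, P S) :
    sInf {c : Cardinal | ∃ F : Set α, #F = c ∧ Q F} ≤
      sInf {c : Cardinal | ∃ S : Set α, #S = c ∧ P S} := by
  obtain ⟨S, hS⟩ := hP
  refine csInf_le_csInf' ⟨#S, S, rfl, hS⟩ ?_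
  rintro c ⟨T, rfl, hT⟩
  exact ⟨T, rfl, hPQ T hT⟩

theorem stmt1_general (r : ℕ → Set ((ℕ → ℕ) × (ℕ → ℕ)))
    (hnwd : ∀ (n : ℕ) (g : ℕ → ℕ), IsNowhereDense {f : ℕ → ℕ | (f, g) ∈ r n}) :
    (∀ F : Set (ℕ → ℕ), ¬ IsMeagre F → ∀ g : ℕ → ℕ, ∃ f ∈ F, (f, g) ∉ ⋃ n, r n) ∧
    sInf {c : Cardinal | ∃ F : Set (ℕ → ℕ), #F = c ∧
        ∀ g : ℕ → ℕ, ∃ f ∈ F, (f, g) ∉ ⋃ n, r n} ≤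
      sInf {c : Cardinal | ∃ S : Set (ℕ → ℕ), #S = c ∧ ¬ IsMeagre S} := by
  have unbounded (F : Set (ℕ → ℕ)) (hF : ¬ IsMeagre F) (g : ℕ → ℕ) :
      ∃ f ∈ F, (f, g) ∉ ⋃ n, r n :=
    exists_mem_notMem_iUnion_of_not_isMeagre hnwd hF g
  exact ⟨unbounded, sInf_mk_le_sInf_mk_of_imp unbounded
    ⟨univ, not_isMeagre_of_isOpen isOpen_univ univ_nonempty⟩⟩

/-- if ⟨⊏ₙ⟩ is an increasing sequence of closed relations on Baire space with
nowhere dense vertical sections and ⊏ = ⋃ₙ ⊏ₙ, then every non-meager set is ⊏-unbounded,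
hence b_⊏ ≤ non(M). -/
theorem stmt1 (r : ℕ → Set ((ℕ → ℕ) × (ℕ → ℕ)))
    (hmono : ∀ m n : ℕ, m ≤ n → r m ⊆ r n)
    (hclosed : ∀ n : ℕ, IsClosed (r n))
    (hnwd : ∀ (n : ℕ) (g : ℕ → ℕ), IsNowhereDense {f : ℕ → ℕ | (f, g) ∈ r n}) :
    (∀ F : Set (ℕ → ℕ), ¬ IsMeagre F → ∀ g : ℕ → ℕ, ∃ f ∈ F, (f, g) ∉ ⋃ n, r n) ∧
    sInf {c : Cardinal | ∃ F : Set (ℕ → ℕ), #F = c ∧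
        ∀ g : ℕ → ℕ, ∃ f ∈ F, (f, g) ∉ ⋃ n, r n} ≤
      sInf {c : Cardinal | ∃ S : Set (ℕ → ℕ), #S = c ∧ ¬ IsMeagre S} :=
  stmt1_general r hnwd
end

section
/- For every g ∈ 2^ω, the set {f ∈ 2^ω : for all but finitely many k, f↾Iₖ ≠ g↾Iₖ} is meager in the Cantor space 2^ω, where ⟨Iₙ⟩_{n<ω} is the partition of ℕ into consecutive intervals with |Iₙ| = 2^{n+1}. -/
/- The sequences that differ from `g` somewhere in every block `I k` with `k ≥ m` form a closed set
(each block is finite) with empty interior (a basic open set constrains only an initial segment,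
after which a sequence may copy `g` and so agree with it on all later blocks). The set in question
is the union of these closed nowhere dense sets over `m`. -/

open Filter Set

/-- The interval partition of ℕ with |Iₙ| = 2^(n+1): Iₙ = [2^(n+1) - 2, 2^(n+2) - 2). -/
def intervalI (n : ℕ) : Set ℕ := Set.Ico (2 ^ (n + 1) - 2) (2 ^ (n + 2) - 2)

open PiNat

section

variable {α : Type*} [TopologicalSpace α] [DiscreteTopology α] (I : ℕ → Set ℕ) (g : ℕ → α)

lemma isClosed_setOf_forall_ge_exists_ne (hI : ∀ k, (I k).Finite) (m : ℕ) :
    IsClosed {f : ℕ → α | ∀ k ≥ m, ∃ j ∈ I k, f j ≠ g j} := by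
  have hrepr : {f : ℕ → α | ∀ k ≥ m, ∃ j ∈ I k, f j ≠ g j} =
      ⋂ k ≥ m, ⋃ j ∈ I k, (fun f : ℕ → α => f j) ⁻¹' {g j}ᶜ := by
    ext f
    simp
  rw [hrepr]
  exact isClosed_biInter fun k _ => (hI k).isClosed_biUnion fun j _ =>
    (isClosed_discrete _).preimage (continuous_apply j)

lemma interior_setOf_forall_ge_exists_ne_eq_empty (hI : ∀ N, ∀ᶠ k in atTop, ∀ j ∈ I k, N ≤ j)
    (m : ℕ) : interior {f : ℕ → α | ∀ k ≥ m, ∃ j ∈ I k, f j ≠ g j} = ∅ := by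
  refine eq_empty_of_forall_notMem fun f hf => ?_
  obtain ⟨_, ⟨x, N, rfl⟩, hfx, hsub⟩ := (isTopologicalBasis_cylinders fun _ => α).mem_nhds_iff.1
    (mem_interior_iff_mem_nhds.1 hf)
  obtain ⟨k, hkN, hkm⟩ := ((hI N).and (eventually_ge_atTop m)).exists
  let h : ℕ → α := fun j => if j < N then f j else g j
  have hh : h ∈ cylinder x N :=
    mem_cylinder_iff.2 fun i hi => by simp [h, hi, mem_cylinder_iff.1 hfx i hi]
  obtain ⟨j, hj, hne⟩ := hsub hh k hkm
  exact hne (if_neg (hkN j hj).not_gt)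

theorem isMeagre_setOf_eventually_exists_ne (hfin : ∀ k, (I k).Finite)
    (hI : ∀ N, ∀ᶠ k in atTop, ∀ j ∈ I k, N ≤ j) :
    IsMeagre {f : ℕ → α | ∀ᶠ k in atTop, ∃ j ∈ I k, f j ≠ g j} := by
  have hmeagre (m : ℕ) : IsMeagre {f : ℕ → α | ∀ k ≥ m, ∃ j ∈ I k, f j ≠ g j} :=
    ((isClosed_setOf_forall_ge_exists_ne I g hfin m).isNowhereDense_iff.2
      (interior_setOf_forall_ge_exists_ne_eq_empty I g hI m)).isMeagre
  refine (isMeagre_iUnion hmeagre).mono fun f hf => ?_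
  obtain ⟨m, hm⟩ := eventually_atTop.1 hf
  exact mem_iUnion.2 ⟨m, hm⟩

end

lemma le_of_mem_intervalI {j k : ℕ} (hj : j ∈ intervalI k) : k ≤ j := by
  have := Nat.lt_two_pow_self (n := k + 1)
  exact le_trans (show k ≤ 2 ^ (k + 1) - 2 by omega) hj.1

/-- for every g ∈ 2^ω, {f : f↾Iₖ ≠ g↾Iₖ for all but finitely many k} is meager. -/
theorem stmt5 (g : ℕ → Bool) :
    IsMeagre {f : ℕ → Bool | ∀ᶠ k in atTop, ∃ j ∈ intervalI k, f j ≠ g j} :=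
  isMeagre_setOf_eventually_exists_ne intervalI g (fun _ => finite_Ico _ _)
    fun N => eventually_atTop.2 ⟨N, fun _ hk _ hj => hk.trans (le_of_mem_intervalI hj)⟩
end

section
/- cov(N) ≤ b_⋔, where cov(N) is the least cardinality of a family of null subsets of 2^ω covering 2^ω and b_⋔ is the least cardinality of a ⋔-unbounded family in 2^ω. -/
open Filter Set MeasureTheory Cardinal

/-- f ⋔ g iff for all but finitely many k, f↾Iₖ ≠ g↾Iₖ. -/
def Fork (f g : ℕ → Bool) : Prop := ∀ᶠ k in atTop, ∃ j ∈ intervalI k, f j ≠ g j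

/-- A measure on Cantor space is the fair-coin product measure iff it is a probability
measure giving each cylinder determined by finitely many coordinates its fair value. -/
def IsFairCoin (μ : Measure (ℕ → Bool)) : Prop :=
  IsProbabilityMeasure μ ∧
  ∀ (s : Finset ℕ) (σ : ℕ → Bool),
    μ {f : ℕ → Bool | ∀ i ∈ s, f i = σ i} = (1 / 2 : ENNReal) ^ s.card

/-! For each `f`, the set of `g` with `¬ f ⋔ g` is null by Borel–Cantelli: `g` must agree with `f`
on infinitely many of the intervals `Iₖ`, and agreeing on `Iₖ` has probability `2^(-2^(k+1))`,
which is summable. Hence the sets `{g | ¬ f ⋔ g}`, `f ∈ F`, for a `⋔`-unbounded family `F` are at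
most `#F` null sets covering `2^ω`. -/

universe u

theorem sInf_null_cover_le_mk {X ι : Type u} [MeasurableSpace X] (μ : Measure X)
    (A : ι → Set X) (hA : ∀ i, μ (A i) = 0) (F : Set ι) (hF : ∀ x, ∃ i ∈ F, x ∈ A i) :
    sInf {c : Cardinal | ∃ 𝒜 : Set (Set X), #𝒜 = c ∧ (∀ B ∈ 𝒜, μ B = 0) ∧ ⋃₀ 𝒜 = Set.univ} ≤
      #F := by
  have hcover : #(A '' F) ∈
      {c : Cardinal | ∃ 𝒜 : Set (Set X), #𝒜 = c ∧ (∀ B ∈ 𝒜, μ B = 0) ∧ ⋃₀ 𝒜 = Set.univ} := by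
    refine ⟨A '' F, rfl, ?_, ?_⟩
    · rintro _ ⟨i, -, rfl⟩
      exact hA i
    · refine eq_univ_of_forall fun x => ?_
      obtain ⟨i, hiF, hxi⟩ := hF x
      exact ⟨A i, mem_image_of_mem A hiF, hxi⟩
  exact (csInf_le (OrderBot.bddBelow _) hcover).trans mk_image_le

theorem not_fork_self (f : ℕ → Bool) : ¬ Fork f f := fun h =>
  let ⟨_, _, _, hne⟩ := h.exists
  hne rfl

namespace IsFairCoin

variable {μ : Measure (ℕ → Bool)}

theorem measure_agree_on_Ico (hμ : IsFairCoin μ) (f : ℕ → Bool) (a b : ℕ) :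
    μ {g | ∀ j ∈ Ico a b, g j = f j} = (1 / 2 : ENNReal) ^ (b - a) := by
  simpa only [Finset.mem_Ico, mem_Ico, Nat.card_Ico] using hμ.2 (Finset.Ico a b) f

theorem measure_agree_on_intervalI (hμ : IsFairCoin μ) (f : ℕ → Bool) (k : ℕ) :
    μ {g | ∀ j ∈ intervalI k, g j = f j} = (1 / 2 : ENNReal) ^ 2 ^ (k + 1) := by
  have : 2 ≤ 2 ^ (k + 1) := Nat.le_self_pow (Nat.succ_ne_zero k) 2
  rw [intervalI, hμ.measure_agree_on_Ico, pow_succ 2 (k + 1)]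
  congr 1
  omega

theorem measure_not_fork (hμ : IsFairCoin μ) (f : ℕ → Bool) : μ {g | ¬ Fork f g} = 0 := by
  set E : ℕ → Set (ℕ → Bool) := fun k => {g | ∀ j ∈ intervalI k, g j = f j}
  have hE_le : ∀ k, μ (E k) ≤ (1 / 2 : ENNReal) ^ k := fun k => by
    rw [hμ.measure_agree_on_intervalI]
    exact pow_le_pow_of_le_one zero_le (by norm_num)
      ((Nat.lt_two_pow_self).le.trans (Nat.pow_le_pow_right two_pos k.le_succ))
  have hsum : ∑' k, μ (E k) ≠ ⊤ :=
    ne_top_of_le_ne_top (by simp [ENNReal.tsum_geometric]) (ENNReal.tsum_le_tsum hE_le)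
  have hsub : {g | ¬ Fork f g} ⊆ limsup E atTop := fun g hg => by
    rw [mem_limsup_iff_frequently_mem]
    refine (not_eventually.mp hg).mono fun k hk j hj => ?_
    by_contra hne
    exact hk ⟨j, hj, Ne.symm hne⟩
  exact measure_mono_null hsub (measure_limsup_atTop_eq_zero hsum)

end IsFairCoin

/-- cov(N) ≤ b_⋔. -/
theorem stmt7 (μ : Measure (ℕ → Bool)) (hμ : IsFairCoin μ) :
    sInf {c : Cardinal | ∃ 𝒜 : Set (Set (ℕ → Bool)), #𝒜 = c ∧
        (∀ A ∈ 𝒜, μ A = 0) ∧ ⋃₀ 𝒜 = Set.univ} ≤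
      sInf {c : Cardinal | ∃ F : Set (ℕ → Bool), #F = c ∧
        ∀ g : ℕ → Bool, ∃ f ∈ F, ¬ Fork f g} := by
  -- `sInf ∅ = 0` in `Cardinal`, so we need that `2^ω` itself is `⋔`-unbounded.
  refine le_csInf ⟨_, Set.univ, rfl, fun g => ⟨g, mem_univ g, not_fork_self g⟩⟩ ?_
  rintro _ ⟨F, rfl, hF⟩
  exact sInf_null_cover_le_mk μ (fun f => {g | ¬ Fork f g}) hμ.measure_not_fork F hF
end

section
/- d_⋔ ≤ non(N), where d_⋔ is the least cardinality of a ⋔-dominating family in 2^ω and non(N) is the least cardinality of a non-null subset of 2^ω. -/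
open Filter Set MeasureTheory Cardinal

/-! By Borel–Cantelli, for a fixed `x` the set of `f` that agree with `x` on infinitely many
intervals `Iₖ` is null, since agreeing on `Iₖ` has probability `2^(-2^(k+1))`, a summable
sequence. Hence every non-null set contains, for each `x`, some `f` with `x ⋔ f`: every
non-null set is `⋔`-dominating. -/

theorem card_Ico_intervalI (n : ℕ) :
    (Finset.Ico (2 ^ (n + 1) - 2) (2 ^ (n + 2) - 2)).card = 2 ^ (n + 1) := by
  have : 2 ≤ 2 ^ (n + 1) := le_self_pow₀ one_le_two n.succ_ne_zero
  rw [Nat.card_Ico, pow_succ 2 (n + 1)]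
  omega

section FairCoin

variable {μ : Measure (ℕ → Bool)}
  (hcyl : ∀ (s : Finset ℕ) (σ : ℕ → Bool),
    μ {f : ℕ → Bool | ∀ i ∈ s, f i = σ i} = (1 / 2 : ENNReal) ^ s.card)
include hcyl

theorem measure_setOf_eqOn_intervalI (x : ℕ → Bool) (n : ℕ) :
    μ {f : ℕ → Bool | ∀ j ∈ intervalI n, f j = x j} = (1 / 2 : ENNReal) ^ 2 ^ (n + 1) := by
  have h := hcyl (Finset.Ico (2 ^ (n + 1) - 2) (2 ^ (n + 2) - 2)) x
  rw [card_Ico_intervalI] at h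
  simpa only [intervalI, ← Finset.coe_Ico, Finset.mem_coe] using h

theorem tsum_measure_setOf_eqOn_intervalI_ne_top (x : ℕ → Bool) :
    ∑' n, μ {f : ℕ → Bool | ∀ j ∈ intervalI n, f j = x j} ≠ ⊤ := by
  have hle : ∀ n, μ {f : ℕ → Bool | ∀ j ∈ intervalI n, f j = x j} ≤ (1 / 2 : ENNReal) ^ n :=
    fun n => (measure_setOf_eqOn_intervalI hcyl x n).trans_le <|
      pow_le_pow_of_le_one zero_le (by norm_num) (n.lt_succ_self.trans Nat.lt_two_pow_self).le
  refine ne_top_of_le_ne_top ?_ (ENNReal.tsum_le_tsum hle)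
  simp [ENNReal.tsum_geometric]

theorem measure_setOf_not_fork_eq_zero (x : ℕ → Bool) :
    μ {f : ℕ → Bool | ¬ Fork x f} = 0 := by
  have hnull := measure_setOfPred_frequently_eq_zero
    (tsum_measure_setOf_eqOn_intervalI_ne_top hcyl x)
  convert hnull using 3 with f
  simp only [Fork, not_eventually, not_exists, not_and, not_not, eq_comm]

theorem exists_fork_of_measure_ne_zero {S : Set (ℕ → Bool)} (hS : μ S ≠ 0) (x : ℕ → Bool) :
    ∃ f ∈ S, Fork x f := by
  by_contra! h
  exact hS (measure_mono_null h (measure_setOf_not_fork_eq_zero hcyl x))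

end FairCoin

/-- d_⋔ ≤ non(N). -/
theorem stmt10 (μ : Measure (ℕ → Bool)) (hμ : IsFairCoin μ) :
    sInf {c : Cardinal | ∃ D : Set (ℕ → Bool), #D = c ∧
        ∀ x : ℕ → Bool, ∃ f ∈ D, Fork x f} ≤
      sInf {c : Cardinal | ∃ S : Set (ℕ → Bool), #S = c ∧ μ S ≠ 0} := by
  obtain ⟨hprob, hcyl⟩ := hμ
  refine csInf_le_csInf' ⟨_, univ, rfl, by simp⟩ ?_
  rintro c ⟨S, rfl, hS⟩
  exact ⟨S, rfl, exists_fork_of_measure_ne_zero hcyl hS⟩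
end

section
/- add(M) = min{b, cov(M)}, where add(M) is the least cardinality of a family of meager subsets of ω^ω whose union is not meager, b is the least cardinality of a <*-unbounded family in ω^ω, and cov(M) is the least cardinality of a family of meager subsets of ω^ω covering ω^ω. -/
open Filter Set Cardinal

/-!
Everything is transferred to Cantor space `ℕ → Bool` along the dense embedding
`g ↦ 0^(g 0) 1 0^(g 1) 1 ⋯` of Baire space, which preserves meagreness in both directions.
There every meagre set lies in a set `blockAvoiding n w` of points that, on almost every
interval `[n k, n (k + 1))`, differ from the pattern `w k`.

`min 𝔟 cov(ℳ) ≤ add(ℳ)` (Miller–Truss): take fewer than `min 𝔟 cov(ℳ)` meagre sets, inside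
canonical sets `blockAvoiding (c a) (v a)`. Domination merges the `c a` into one partition
`n` whose almost every interval contains a whole `c a`-interval. Since the family does not
cover, some `z` copies, for each `a`, a pattern of `v a` inside infinitely many `n`-intervals.
Domination again groups the `n`-intervals so that this happens in almost every group, and then
the whole union avoids `z` on almost every group.

`add(ℳ) ≤ 𝔟`: for `f` in an unbounded family, the sets of sequences in which eventually no run
of more than `max_{l ≤ i} f l` values `false` starts at `i` are meagre. Given a canonical
set `blockAvoiding n w`, some `f` exceeds `l ↦ n (2 l + 1)` infinitely often. Copying `w` on
those even intervals and `true` everywhere else gives a point of the union outside the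
canonical set.
-/

open Topology PiNat

section Meagre

variable {X Y : Type*} [TopologicalSpace X] [TopologicalSpace Y]

theorem IsDenseInducing.isNowhereDense_preimage {e : X → Y} (he : IsDenseInducing e)
    {s : Set Y} (hs : IsNowhereDense s) : IsNowhereDense (e ⁻¹' s) := by
  obtain ⟨V, hVo, hV⟩ := he.isInducing.isOpen_iff.1 (isOpen_interior (s := e ⁻¹' closure s))
  have hVs : V ⊆ interior (closure s) := by
    refine interior_maximal ((he.dense.open_subset_closure_inter hVo).trans ?_) hVo
    refine closure_minimal ?_ isClosed_closure
    rintro _ ⟨hy, x, rfl⟩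
    have hx : x ∈ e ⁻¹' V := hy
    rw [hV] at hx
    exact (interior_subset hx : x ∈ e ⁻¹' closure s)
  rw [hs, subset_empty_iff] at hVs
  refine subset_empty_iff.1 ((interior_mono (he.continuous.closure_preimage_subset s)).trans ?_)
  rw [← hV, hVs, preimage_empty]

theorem IsDenseInducing.isMeagre_preimage {e : X → Y} (he : IsDenseInducing e)
    {s : Set Y} (hs : IsMeagre s) : IsMeagre (e ⁻¹' s) := by
  rw [isMeagre_iff_countable_union_isNowhereDense] at hs ⊢
  obtain ⟨S, hSnd, hSc, hsS⟩ := hs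
  refine ⟨preimage e '' S, forall_mem_image.2 fun t ht => he.isNowhereDense_preimage (hSnd t ht),
    hSc.image _, ?_⟩
  rw [sUnion_image, ← preimage_iUnion₂, ← sUnion_eq_biUnion]
  exact preimage_mono hsS

theorem IsMeagre.exists_monotone_isClosed_isNowhereDense {A : Set X} (hA : IsMeagre A) :
    ∃ F : ℕ → Set X, Monotone F ∧ (∀ n, IsClosed (F n) ∧ IsNowhereDense (F n)) ∧
      A ⊆ ⋃ n, F n := by
  obtain ⟨S, hSo, hSd, hSc, hS⟩ := mem_residual_iff.1 hA
  obtain ⟨U, hU⟩ := (hSc.insert Set.univ).exists_eq_range (insert_nonempty _ _)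
  have hUod : ∀ i, IsOpen (U i) ∧ Dense (U i) := fun i => by
    rcases (hU ▸ mem_range_self i : U i ∈ insert Set.univ S) with h | h
    · exact h ▸ ⟨isOpen_univ, dense_univ⟩
    · exact ⟨hSo _ h, hSd _ h⟩
  refine ⟨fun n => (⋂₀ (U '' Iic n))ᶜ, fun m n hmn => compl_subset_compl.2
    (sInter_subset_sInter (image_mono (Iic_subset_Iic.2 hmn))), fun n => ?_, fun x hx => ?_⟩
  · rw [isClosed_isNowhereDense_iff_compl, compl_compl]
    have hfin := (finite_Iic n).image U
    exact ⟨hfin.isOpen_sInter (forall_mem_image.2 fun i _ => (hUod i).1),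
      hfin.dense_sInter (forall_mem_image.2 fun i _ => (hUod i).1)
        (forall_mem_image.2 fun i _ => (hUod i).2)⟩
  · by_contra hxF
    simp only [mem_iUnion, mem_compl_iff, not_exists, not_not] at hxF
    refine hS (fun t ht => ?_) hx
    obtain ⟨i, rfl⟩ : t ∈ range U := hU ▸ mem_insert_of_mem _ ht
    exact hxF i _ (mem_image_of_mem U (mem_Iic.2 le_rfl))

theorem isMeagre_setOf_eventually_notMem {P : ℕ → Set X} (hPo : ∀ k, IsOpen (P k))
    (hPd : ∀ N, Dense (⋃ k ≥ N, P k)) : IsMeagre {x | ∀ᶠ k in atTop, x ∉ P k} := by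
  have : {x | ∀ᶠ k in atTop, x ∉ P k} = ⋃ N, (⋃ k ≥ N, P k)ᶜ := by
    ext x; simp [eventually_atTop]
  rw [this]
  refine isMeagre_iUnion fun N => IsNowhereDense.isMeagre ?_
  refine (isClosed_isNowhereDense_iff_compl.2 ?_).2
  rw [compl_compl]
  exact ⟨isOpen_biUnion fun k _ => hPo k, hPd N⟩

end Meagre

section SequenceSpace

variable {α : Type*} [TopologicalSpace α] [DiscreteTopology α]

theorem exists_cylinder_subset_of_mem_nhds {U : Set (ℕ → α)} {x : ℕ → α} (hU : U ∈ 𝓝 x) :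
    ∃ n, cylinder x n ⊆ U := by
  obtain ⟨_, ⟨y, n, rfl⟩, hx, hsub⟩ := (isTopologicalBasis_cylinders _).mem_nhds_iff.1 hU
  exact ⟨n, mem_cylinder_iff_eq.1 hx ▸ hsub⟩

theorem Set.Finite.isOpen_setOf_eqOn {s : Set ℕ} (hs : s.Finite) (y : ℕ → α) :
    IsOpen {x : ℕ → α | EqOn x y s} := by
  have : {x : ℕ → α | EqOn x y s} = ⋂ i ∈ s, (fun x => x i) ⁻¹' {y i} := by
    ext x; simp [EqOn]
  rw [this]
  exact hs.isOpen_biInter fun i _ => (isOpen_discrete _).preimage (continuous_apply i)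

theorem isMeagre_setOf_eventually_notMem_of_forall_exists {P : ℕ → Set (ℕ → α)}
    (hPo : ∀ k, IsOpen (P k)) (hP : ∀ N (x : ℕ → α) n, ∃ k ≥ N, ∃ z ∈ P k, z ∈ cylinder x n) :
    IsMeagre {x | ∀ᶠ k in atTop, x ∉ P k} := by
  refine isMeagre_setOf_eventually_notMem hPo fun N => ?_
  refine (isTopologicalBasis_cylinders _).dense_iff.2 ?_
  rintro _ ⟨x, n, rfl⟩ -
  obtain ⟨k, hk, z, hz, hzx⟩ := hP N x n
  exact ⟨z, hzx, mem_biUnion hk hz⟩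

theorem IsNowhereDense.exists_disjoint_cylinder {F : Set (ℕ → α)} (hFc : IsClosed F)
    (hF : IsNowhereDense F) (x : ℕ → α) (n : ℕ) :
    ∃ y ∈ cylinder x n, ∃ m ≥ n, Disjoint F (cylinder y m) := by
  have hnsub : ¬ cylinder x n ⊆ F := fun h => by
    simpa [hFc.isNowhereDense_iff.1 hF] using
      interior_maximal h (isOpen_cylinder _ x n) (self_mem_cylinder x n)
  obtain ⟨y, hy, hyF⟩ := not_subset.1 hnsub
  obtain ⟨m, hm⟩ := PiNat.exists_disjoint_cylinder hFc hyF
  exact ⟨y, hy, max m n, le_max_right _ _, hm.mono_right (cylinder_anti _ (le_max_left _ _))⟩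

theorem isMeagre_singleton_of_nontrivial [Nontrivial α] (g : ℕ → α) : IsMeagre {g} := by
  refine (isMeagre_setOf_eventually_notMem_of_forall_exists
    (P := fun k => (fun x : ℕ → α => x k) ⁻¹' {g k}ᶜ)
    (fun k => (isOpen_discrete _).preimage (continuous_apply k)) fun N x n => ?_).mono
    fun x hx => Eventually.of_forall fun k => by simp [mem_singleton_iff.1 hx]
  obtain ⟨a, ha⟩ := exists_ne (g (max N n))
  exact ⟨max N n, le_max_left _ _, Function.update x _ a, by simpa using ha,
    cylinder_anti x (le_max_right N n) (update_mem_cylinder x _ a)⟩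

end SequenceSpace

section BlockAvoiding

variable {α : Type*}

def blockAvoiding (n : ℕ → ℕ) (w : ℕ → ℕ → α) : Set (ℕ → α) :=
  {x | ∀ᶠ k in atTop, ¬ EqOn x (w k) (Ico (n k) (n (k + 1)))}

variable [TopologicalSpace α] [DiscreteTopology α]

theorem isMeagre_blockAvoiding {n : ℕ → ℕ} (hn : StrictMono n) (w : ℕ → ℕ → α) :
    IsMeagre (blockAvoiding n w) := by
  refine isMeagre_setOf_eventually_notMem_of_forall_exists
    (fun k => (finite_Ico _ _).isOpen_setOf_eqOn (w k)) fun N x j => ?_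
  refine ⟨max N j, le_max_left _ _, (Ico _ _).piecewise (w (max N j)) x,
    fun i hi => piecewise_eq_of_mem _ _ _ hi, mem_cylinder_iff.2 fun i hi => ?_⟩
  refine piecewise_eq_of_notMem _ _ _ fun hi' => ?_
  have : max N j ≤ n (max N j) := hn.le_apply
  have := hi'.1
  omega

theorem IsNowhereDense.exists_forall_eqOn_Ico_notMem [Finite α] [Nonempty α] {F : Set (ℕ → α)}
    (hFc : IsClosed F) (hF : IsNowhereDense F) (m : ℕ) :
    ∃ l > m, ∃ w : ℕ → α, ∀ x, EqOn x w (Ico m l) → x ∉ F := by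
  classical
  have := Fintype.ofFinite α
  suffices ∀ V : Finset (Fin m → α), ∃ l > m, ∃ w : ℕ → α,
      ∀ x, (fun i : Fin m => x i) ∈ V → EqOn x w (Ico m l) → x ∉ F by
    obtain ⟨l, hl, w, hw⟩ := this Finset.univ
    exact ⟨l, hl, w, fun x => hw x (Finset.mem_univ _)⟩
  intro V
  induction V using Finset.induction_on with
  | empty => exact ⟨m + 1, by omega, fun _ => Classical.arbitrary α, by simp⟩
  | insert v V _ ih =>
    obtain ⟨l, hlm, w, hw⟩ := ih
    let z : ℕ → α := fun i => if h : i < m then v ⟨i, h⟩ else w i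
    obtain ⟨y, hyz, l', hll', hy⟩ := hF.exists_disjoint_cylinder hFc z l
    have hyw : EqOn y w (Ico m l) := fun i hi => by
      rw [mem_cylinder_iff.1 hyz i hi.2]
      simp [z, not_lt.2 hi.1]
    refine ⟨l', by omega, y, fun x hxV hxy => ?_⟩
    rcases Finset.mem_insert.1 hxV with hxv | hxV
    · refine disjoint_right.1 hy (mem_cylinder_iff.2 fun i hi => ?_)
      rcases lt_or_ge i m with him | him
      · rw [mem_cylinder_iff.1 hyz i (by omega)]
        simpa [z, him] using congrFun hxv ⟨i, him⟩
      · exact hxy ⟨him, hi⟩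
    · exact hw x hxV fun i hi => (hxy ⟨hi.1, hi.2.trans_le hll'⟩).trans (hyw hi)

theorem IsMeagre.exists_subset_blockAvoiding [Finite α] [Nonempty α] {A : Set (ℕ → α)}
    (hA : IsMeagre A) : ∃ (n : ℕ → ℕ) (w : ℕ → ℕ → α), StrictMono n ∧ A ⊆ blockAvoiding n w := by
  obtain ⟨F, hFm, hF, hAF⟩ := hA.exists_monotone_isClosed_isNowhereDense
  choose L hL W hW using fun m k => (hF k).2.exists_forall_eqOn_Ico_notMem (hF k).1 m
  let n : ℕ → ℕ := fun k => Nat.rec 0 (fun k nk => L nk k) k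
  refine ⟨n, fun k => W (n k) k, strictMono_nat_of_lt_succ fun k => hL (n k) k, fun x hx => ?_⟩
  obtain ⟨j, hj⟩ := mem_iUnion.1 (hAF hx)
  exact eventually_atTop.2 ⟨j, fun k hk hxk => hW (n k) k x hxk (hFm hk hj)⟩

end BlockAvoiding

section MillerTruss

variable {ι α : Type*}

theorem exists_strictMono_eventually_lt
    (hb : ∀ e : ι → ℕ → ℕ, ∃ h : ℕ → ℕ, ∀ a, ∀ᶠ m in atTop, e a m < h m) (e : ι → ℕ → ℕ) :
    ∃ n : ℕ → ℕ, StrictMono n ∧ ∀ a, ∀ᶠ k in atTop, e a (n k) < n (k + 1) := by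
  obtain ⟨h, hh⟩ := hb e
  let n : ℕ → ℕ := fun k => (fun p => max (h p) (p + 1))^[k] 0
  have hsucc : ∀ k, n (k + 1) = max (h (n k)) (n k + 1) := fun k =>
    Function.iterate_succ_apply' _ k 0
  have hn : StrictMono n := strictMono_nat_of_lt_succ fun k => by rw [hsucc]; omega
  refine ⟨n, hn, fun a => (hn.tendsto_atTop.eventually (hh a)).mono fun k hk => ?_⟩
  rw [hsucc]
  exact hk.trans_le (le_max_left _ _)

theorem exists_strictMono_eventually_exists_block_subset
    (hb : ∀ e : ι → ℕ → ℕ, ∃ h : ℕ → ℕ, ∀ a, ∀ᶠ m in atTop, e a m < h m)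
    {c : ι → ℕ → ℕ} (hc : ∀ a, StrictMono (c a)) :
    ∃ n : ℕ → ℕ, StrictMono n ∧
      ∀ a, ∀ᶠ k in atTop, ∃ j, n k ≤ c a j ∧ c a (j + 1) ≤ n (k + 1) := by
  have hex : ∀ a m, ∃ j, m ≤ c a j := fun a m => ⟨m, (hc a).le_apply⟩
  obtain ⟨n, hn, hnc⟩ :=
    exists_strictMono_eventually_lt hb fun a m => c a (Nat.find (hex a m) + 1)
  exact ⟨n, hn, fun a => (hnc a).mono fun k hk => ⟨_, Nat.find_spec (hex a (n k)), hk.le⟩⟩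

theorem exists_strictMono_eventually_exists_mem_Ico
    (hb : ∀ e : ι → ℕ → ℕ, ∃ h : ℕ → ℕ, ∀ a, ∀ᶠ m in atTop, e a m < h m)
    {P : ι → ℕ → Prop} (hP : ∀ a, ∃ᶠ k in atTop, P a k) :
    ∃ m : ℕ → ℕ, StrictMono m ∧ ∀ a, ∀ᶠ l in atTop, ∃ k ∈ Ico (m l) (m (l + 1)), P a k := by
  classical
  have hex : ∀ a p, ∃ k, p ≤ k ∧ P a k := fun a => frequently_atTop.1 (hP a)
  obtain ⟨m, hm, hmP⟩ := exists_strictMono_eventually_lt hb fun a p => Nat.find (hex a p)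
  exact ⟨m, hm, fun a => (hmP a).mono fun l hl =>
    ⟨_, ⟨(Nat.find_spec (hex a (m l))).1, hl⟩, (Nat.find_spec (hex a (m l))).2⟩⟩

def matchesBlockWithin (c : ℕ → ℕ) (v : ℕ → ℕ → α) (a b : ℕ) : Set (ℕ → α) :=
  {z | ∃ j, a ≤ c j ∧ c (j + 1) ≤ b ∧ EqOn z (v j) (Ico (c j) (c (j + 1)))}

theorem isMeagre_setOf_eventually_notMem_matchesBlockWithin [TopologicalSpace α]
    [DiscreteTopology α] {c n : ℕ → ℕ} (hn : StrictMono n)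
    (hnc : ∀ᶠ k in atTop, ∃ j, n k ≤ c j ∧ c (j + 1) ≤ n (k + 1)) (v : ℕ → ℕ → α) :
    IsMeagre {z | ∀ᶠ k in atTop, z ∉ matchesBlockWithin c v (n k) (n (k + 1))} := by
  have hopen : ∀ k, IsOpen (matchesBlockWithin c v (n k) (n (k + 1))) := fun k => by
    have : matchesBlockWithin c v (n k) (n (k + 1)) =
        ⋃ j, ⋃ (_ : n k ≤ c j ∧ c (j + 1) ≤ n (k + 1)),
          {z | EqOn z (v j) (Ico (c j) (c (j + 1)))} := by
      ext z; simp [matchesBlockWithin, and_assoc]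
    rw [this]
    exact isOpen_iUnion fun j => isOpen_iUnion fun _ => (finite_Ico _ _).isOpen_setOf_eqOn _
  refine isMeagre_setOf_eventually_notMem_of_forall_exists hopen fun N x i => ?_
  obtain ⟨K, hK⟩ := eventually_atTop.1 hnc
  let k := max (max N i) K
  obtain ⟨j, hj, hj'⟩ := hK k (le_max_right _ _)
  refine ⟨k, (le_max_left _ _).trans (le_max_left _ _), (Ico _ _).piecewise (v j) x,
    ⟨j, hj, hj', fun i' hi' => piecewise_eq_of_mem _ _ _ hi'⟩,
    mem_cylinder_iff.2 fun i' hi' => piecewise_eq_of_notMem _ _ _ fun hi'' => ?_⟩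
  have : k ≤ n k := hn.le_apply
  have := hi''.1
  omega

theorem mem_blockAvoiding_comp {c n m : ℕ → ℕ} (hc : StrictMono c)
    (hn : StrictMono n) (hm : StrictMono m) {v : ℕ → ℕ → α} {z : ℕ → α}
    (hz : ∀ᶠ l in atTop, ∃ k ∈ Ico (m l) (m (l + 1)), z ∈ matchesBlockWithin c v (n k) (n (k + 1)))
    {x : ℕ → α} (hx : x ∈ blockAvoiding c v) : x ∈ blockAvoiding (n ∘ m) fun _ => z := by
  obtain ⟨J, hJ⟩ := eventually_atTop.1 hx
  obtain ⟨L, hL⟩ := eventually_atTop.1 hz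
  refine eventually_atTop.2 ⟨max L (c J + 1), fun l hl hxz => ?_⟩
  obtain ⟨k, ⟨hmk, hkm⟩, j, hkj, hjk, hzj⟩ := hL l (le_of_max_le_left hl)
  have hnm : n (m l) ≤ n k := hn.monotone hmk
  have hkn : n (k + 1) ≤ n (m (l + 1)) := hn.monotone hkm
  have hJj : J ≤ j := by
    have : l ≤ n (m l) := (hm.le_apply).trans hn.le_apply
    exact hc.le_iff_le.1 (by omega)
  refine hJ j hJj fun i hi => (hxz (?_ : i ∈ Ico (n (m l)) (n (m (l + 1))))).trans (hzj hi)
  exact ⟨hnm.trans (hkj.trans hi.1), hi.2.trans_le (hjk.trans hkn)⟩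

theorem isMeagre_iUnion_of_bounded_of_not_covering [TopologicalSpace α] [DiscreteTopology α]
    [Finite α] [Nonempty α] {A : ι → Set (ℕ → α)} (hA : ∀ a, IsMeagre (A a))
    (hb : ∀ e : ι → ℕ → ℕ, ∃ h : ℕ → ℕ, ∀ a, ∀ᶠ m in atTop, e a m < h m)
    (hcov : ∀ E : ι → Set (ℕ → α), (∀ a, IsMeagre (E a)) → ∃ z, ∀ a, z ∉ E a) :
    IsMeagre (⋃ a, A a) := by
  choose c v hc hAc using fun a => (hA a).exists_subset_blockAvoiding
  obtain ⟨n, hn, hnc⟩ := exists_strictMono_eventually_exists_block_subset hb hc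
  obtain ⟨z, hz⟩ := hcov _ fun a =>
    isMeagre_setOf_eventually_notMem_matchesBlockWithin hn (hnc a) (v a)
  obtain ⟨m, hm, hmz⟩ := exists_strictMono_eventually_exists_mem_Ico hb
    (P := fun a k => z ∈ matchesBlockWithin (c a) (v a) (n k) (n (k + 1)))
    fun a => (not_eventually.1 (hz a)).mono fun _ => not_not.1
  refine (isMeagre_blockAvoiding (hn.comp hm) fun _ => z).mono (iUnion_subset fun a x hx => ?_)
  exact mem_blockAvoiding_comp (hc a) hn hm (hmz a) (hAc a hx)

end MillerTruss

def cantorCode (g : ℕ → ℕ) (i : ℕ) : Bool :=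
  if i < g 0 then false
  else if i = g 0 then true
  else cantorCode (fun n => g (n + 1)) (i - g 0 - 1)
termination_by i

theorem cantorCode_of_lt {g : ℕ → ℕ} {i : ℕ} (h : i < g 0) : cantorCode g i = false := by
  rw [cantorCode, if_pos h]

theorem cantorCode_self (g : ℕ → ℕ) : cantorCode g (g 0) = true := by
  rw [cantorCode, if_neg (lt_irrefl _), if_pos rfl]

theorem cantorCode_tail (g : ℕ → ℕ) (i : ℕ) :
    cantorCode g (g 0 + 1 + i) = cantorCode (fun n => g (n + 1)) i := by
  rw [cantorCode, if_neg (by omega), if_neg (by omega)]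
  congr 1
  omega

def codeLength (g : ℕ → ℕ) (n : ℕ) : ℕ := ∑ i ∈ Finset.range n, (g i + 1)

theorem codeLength_succ (g : ℕ → ℕ) (n : ℕ) :
    codeLength g (n + 1) = g 0 + 1 + codeLength (fun i => g (i + 1)) n := by
  rw [codeLength, Finset.sum_range_succ', add_comm]
  rfl

theorem le_codeLength (g : ℕ → ℕ) (n : ℕ) : n ≤ codeLength g n := by
  simpa [codeLength] using
    Finset.card_nsmul_le_sum (Finset.range n) (fun i => g i + 1) 1 (by simp)

theorem cantorCode_mem_cylinder_iff {g g' : ℕ → ℕ} {L : ℕ} :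
    cantorCode g' ∈ cylinder (cantorCode g) (g 0 + 1 + L) ↔
      g' 0 = g 0 ∧
        cantorCode (fun n => g' (n + 1)) ∈ cylinder (cantorCode fun n => g (n + 1)) L := by
  simp only [mem_cylinder_iff]
  constructor
  · intro h
    have h0 : g' 0 = g 0 := by
      by_contra hne
      rcases lt_or_gt_of_ne hne with hlt | hlt
      · simpa [cantorCode_self, cantorCode_of_lt hlt] using h (g' 0) (by omega)
      · simpa [cantorCode_self, cantorCode_of_lt hlt] using h (g 0) (by omega)
    refine ⟨h0, fun i hi => ?_⟩
    have := h (g 0 + 1 + i) (by omega)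
    rwa [cantorCode_tail, ← h0, cantorCode_tail] at this
  · rintro ⟨h0, h⟩ i hi
    rcases lt_trichotomy i (g 0) with hlt | rfl | hgt
    · rw [cantorCode_of_lt hlt, cantorCode_of_lt (h0 ▸ hlt)]
    · rw [cantorCode_self, ← h0, cantorCode_self]
    · obtain ⟨i, rfl⟩ : ∃ i', i = g 0 + 1 + i' := ⟨i - g 0 - 1, by omega⟩
      rw [cantorCode_tail, ← h0, cantorCode_tail]
      exact h i (by omega)

theorem mem_cylinder_iff_cantorCode {g g' : ℕ → ℕ} {n : ℕ} :
    g' ∈ cylinder g n ↔ cantorCode g' ∈ cylinder (cantorCode g) (codeLength g n) := by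
  induction n generalizing g g' with
  | zero => simp [codeLength]
  | succ n ih =>
    rw [codeLength_succ, cantorCode_mem_cylinder_iff, ← ih]
    simp only [mem_cylinder_iff, Nat.forall_lt_succ_left]

theorem continuous_cantorCode : Continuous cantorCode := by
  refine continuous_pi fun i => IsLocallyConstant.continuous ?_
  refine (IsLocallyConstant.iff_eventually_eq _).2 fun g => ?_
  filter_upwards [(isOpen_cylinder _ g (i + 1)).mem_nhds (self_mem_cylinder g (i + 1))] with g' hg'
  exact mem_cylinder_iff.1 (mem_cylinder_iff_cantorCode.1 hg') i
    (by have := le_codeLength g (i + 1); omega)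

theorem isInducing_cantorCode : IsInducing cantorCode := by
  refine isInducing_iff_nhds.2 fun g => le_antisymm (continuous_cantorCode.tendsto g).le_comap ?_
  intro U hU
  obtain ⟨n, hn⟩ := exists_cylinder_subset_of_mem_nhds hU
  exact ⟨_, (isOpen_cylinder _ _ (codeLength g n)).mem_nhds (self_mem_cylinder _ _),
    fun g' hg' => hn (mem_cylinder_iff_cantorCode.2 hg')⟩

noncomputable def cantorDecode : (ℕ → Bool) → ℕ → ℕ
  | x, 0 => sInf {i | x i = true}
  | x, j + 1 => cantorDecode (fun i => x (i + sInf {i | x i = true} + 1)) j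

theorem cantorCode_cantorDecode {x : ℕ → Bool} (hx : ∃ᶠ i in atTop, x i = true) :
    cantorCode (cantorDecode x) = x := by
  funext i
  induction i using Nat.strong_induction_on generalizing x with
  | _ i ih =>
    set t := sInf {i | x i = true}
    have h0 : cantorDecode x 0 = t := rfl
    have htail : (fun n => cantorDecode x (n + 1)) =
        cantorDecode (fun i => x (i + t + 1)) := rfl
    rcases lt_trichotomy i t with hlt | rfl | hgt
    · rw [cantorCode_of_lt (h0 ▸ hlt)]
      simpa using Nat.notMem_of_lt_sInf hlt
    · rw [← h0, cantorCode_self, h0]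
      exact (Nat.sInf_mem hx.exists : x t = true).symm
    · obtain ⟨i, rfl⟩ : ∃ i', i = t + 1 + i' := ⟨i - t - 1, by omega⟩
      have hx' : ∃ᶠ i in atTop, x (i + t + 1) = true := frequently_atTop.2 fun N => by
        obtain ⟨j, hj, hxj⟩ := frequently_atTop.1 hx (N + t + 1)
        exact ⟨j - t - 1, by omega, by rwa [show j - t - 1 + t + 1 = j by omega]⟩
      rw [← h0, cantorCode_tail, htail, h0, ih i (by omega) hx']
      congr 1
      omega

theorem setOf_frequently_true_subset_range_cantorCode :
    {x : ℕ → Bool | ∃ᶠ i in atTop, x i = true} ⊆ range cantorCode :=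
  fun _ hx => ⟨_, cantorCode_cantorDecode hx⟩

theorem isDenseInducing_cantorCode : IsDenseInducing cantorCode := by
  refine ⟨isInducing_cantorCode, Dense.mono setOf_frequently_true_subset_range_cantorCode ?_⟩
  refine (isTopologicalBasis_cylinders _).dense_iff.2 ?_
  rintro _ ⟨x, n, rfl⟩ -
  refine ⟨fun i => if i < n then x i else true, mem_cylinder_iff.2 fun i hi => if_pos hi, ?_⟩
  exact frequently_atTop.2 fun N => ⟨max N n, le_max_left _ _, if_neg (by omega)⟩

theorem StrictMono.eq_of_mem_Ico_of_mem_Ico {n : ℕ → ℕ} (hn : StrictMono n) {a b i : ℕ}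
    (ha : i ∈ Ico (n a) (n (a + 1))) (hb : i ∈ Ico (n b) (n (b + 1))) : a = b := by
  have := hn.lt_iff_lt.1 (ha.1.trans_lt hb.2)
  have := hn.lt_iff_lt.1 (hb.1.trans_lt ha.2)
  omega

def gapBounded (u : ℕ → ℕ) : Set (ℕ → Bool) :=
  {x | ∀ᶠ i in atTop, ∃ j ∈ Icc i (i + u i), x j = true}

theorem isMeagre_gapBounded (u : ℕ → ℕ) : IsMeagre (gapBounded u) := by
  let P : ℕ → Set (ℕ → Bool) := fun i => {x | EqOn x (fun _ => false) (Icc i (i + u i))}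
  refine (isMeagre_setOf_eventually_notMem_of_forall_exists (P := P)
    (fun i => (finite_Icc _ _).isOpen_setOf_eqOn _) fun N x n => ?_).mono fun x hx => ?_
  · refine ⟨max N n, le_max_left _ _, (Icc _ _).piecewise (fun _ => false) x,
      fun i hi => piecewise_eq_of_mem _ _ _ hi,
      mem_cylinder_iff.2 fun i hi => piecewise_eq_of_notMem _ _ _ fun hi' => ?_⟩
    have := hi'.1
    omega
  · refine hx.mono fun i ⟨j, hj, hxj⟩ hxP => ?_
    simp [hxP hj] at hxj

theorem exists_mem_gapBounded_notMem_blockAvoiding {n : ℕ → ℕ} (hn : StrictMono n)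
    (w : ℕ → ℕ → Bool) {u : ℕ → ℕ} (hu : Monotone u)
    (hnu : ∃ᶠ l in atTop, n (2 * l + 1) ≤ u l) :
    ∃ x : ℕ → Bool, (∃ᶠ i in atTop, x i = true) ∧ x ∈ gapBounded u ∧ x ∉ blockAvoiding n w := by
  classical
  let J : Set ℕ := {l | n (2 * l + 1) ≤ u l}
  -- `x` copies `w (2 * l)` on the interval `2 * l` for `l ∈ J`, and is `true` elsewhere
  let x : ℕ → Bool := fun i =>
    decide (∀ l ∈ J, i ∈ Ico (n (2 * l)) (n (2 * l + 1)) → w (2 * l) i = true)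
  have hodd : ∀ l, x (n (2 * l + 1)) = true := fun l => decide_eq_true fun l' _ hl' =>
    absurd (hn.eq_of_mem_Ico_of_mem_Ico hl' ⟨le_rfl, hn (by omega)⟩) (by omega)
  refine ⟨x, frequently_atTop.2 fun N => ⟨n (2 * N + 1), ?_, hodd N⟩, ?_, fun hx => ?_⟩
  · have : 2 * N + 1 ≤ n (2 * N + 1) := hn.le_apply
    omega
  · refine Eventually.of_forall fun i => ?_
    by_cases h : ∃ l ∈ J, i ∈ Ico (n (2 * l)) (n (2 * l + 1))
    · obtain ⟨l, hlJ, hi⟩ := h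
      have : l ≤ n (2 * l) := (Nat.le_mul_of_pos_left l two_pos).trans hn.le_apply
      exact ⟨_, ⟨hi.2.le, (hlJ.trans (hu (this.trans hi.1))).trans (Nat.le_add_left _ _)⟩, hodd l⟩
    · exact ⟨i, ⟨le_rfl, Nat.le_add_right _ _⟩, decide_eq_true fun l hl hi => absurd ⟨l, hl, hi⟩ h⟩
  · obtain ⟨K, hK⟩ := eventually_atTop.1 hx
    obtain ⟨l, hl, hlJ⟩ := frequently_atTop.1 hnu K
    refine hK (2 * l) (by omega) fun i hi => ?_
    have key : (∀ l' ∈ J, i ∈ Ico (n (2 * l')) (n (2 * l' + 1)) → w (2 * l') i = true) ↔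
        w (2 * l) i = true := by
      refine ⟨fun h => h l hlJ hi, fun h l' _ hl' => ?_⟩
      obtain rfl : l' = l := by have := hn.eq_of_mem_Ico_of_mem_Ico hl' hi; omega
      exact h
    simp only [x, key, Bool.decide_eq_true]

theorem not_isMeagre_inter_biUnion_gapBounded {F : Set (ℕ → ℕ)}
    (hF : ∀ g : ℕ → ℕ, ∃ f ∈ F, ¬ ∀ᶠ k in atTop, f k < g k) :
    ¬ IsMeagre ({x : ℕ → Bool | ∃ᶠ i in atTop, x i = true} ∩
      ⋃ f ∈ F, gapBounded (partialSups f)) := by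
  intro h
  obtain ⟨n, w, hn, hsub⟩ := h.exists_subset_blockAvoiding
  obtain ⟨f, hf, hfn⟩ := hF fun l => n (2 * l + 1)
  have hnu : ∃ᶠ l in atTop, n (2 * l + 1) ≤ partialSups f l :=
    (not_eventually.1 hfn).mono fun l hl => (not_lt.1 hl).trans (le_partialSups f l)
  obtain ⟨x, hx, hxg, hxn⟩ :=
    exists_mem_gapBounded_notMem_blockAvoiding hn w (partialSups f).monotone hnu
  exact hxn (hsub ⟨hx, mem_biUnion hf hxg⟩)

theorem not_isMeagre_preimage_cantorCode_biUnion_gapBounded {F : Set (ℕ → ℕ)}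
    (hF : ∀ g : ℕ → ℕ, ∃ f ∈ F, ¬ ∀ᶠ k in atTop, f k < g k) :
    ¬ IsMeagre (cantorCode ⁻¹' ⋃ f ∈ F, gapBounded (partialSups f)) := by
  refine fun h => not_isMeagre_inter_biUnion_gapBounded hF <|
    (isInducing_cantorCode.isMeagre_image h).mono fun x ⟨hx, hxS⟩ => ?_
  exact ⟨cantorDecode x, by rwa [mem_preimage, cantorCode_cantorDecode hx],
    cantorCode_cantorDecode hx⟩

noncomputable def boundingNumber : Cardinal :=
  sInf {c : Cardinal | ∃ F : Set (ℕ → ℕ), #F = c ∧ ∀ g : ℕ → ℕ, ∃ f ∈ F, ¬ ∀ᶠ k in atTop, f k < g k}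

noncomputable def additivityMeagre : Cardinal :=
  sInf {c : Cardinal | ∃ 𝒜 : Set (Set (ℕ → ℕ)), #𝒜 = c ∧
    (∀ A ∈ 𝒜, IsMeagre A) ∧ ¬ IsMeagre (⋃₀ 𝒜)}

noncomputable def coveringMeagre : Cardinal :=
  sInf {c : Cardinal | ∃ 𝒜 : Set (Set (ℕ → ℕ)), #𝒜 = c ∧
    (∀ A ∈ 𝒜, IsMeagre A) ∧ ⋃₀ 𝒜 = Set.univ}

theorem boundingNumber_le_mk {F : Set (ℕ → ℕ)}
    (hF : ∀ g : ℕ → ℕ, ∃ f ∈ F, ¬ ∀ᶠ k in atTop, f k < g k) : boundingNumber ≤ #F :=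
  csInf_le' ⟨F, rfl, hF⟩

theorem additivityMeagre_le_mk {𝒜 : Set (Set (ℕ → ℕ))} (h𝒜 : ∀ A ∈ 𝒜, IsMeagre A)
    (hU : ¬ IsMeagre (⋃₀ 𝒜)) : additivityMeagre ≤ #𝒜 :=
  csInf_le' ⟨𝒜, rfl, h𝒜, hU⟩

theorem coveringMeagre_le_mk {𝒜 : Set (Set (ℕ → ℕ))} (h𝒜 : ∀ A ∈ 𝒜, IsMeagre A)
    (hU : ⋃₀ 𝒜 = Set.univ) : coveringMeagre ≤ #𝒜 :=
  csInf_le' ⟨𝒜, rfl, h𝒜, hU⟩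

theorem exists_isMeagre_cover :
    ∃ 𝒜 : Set (Set (ℕ → ℕ)), (∀ A ∈ 𝒜, IsMeagre A) ∧ ⋃₀ 𝒜 = Set.univ :=
  ⟨range fun g => ({g} : Set (ℕ → ℕ)), forall_mem_range.2 isMeagre_singleton_of_nontrivial, by
    rw [sUnion_range, iUnion_of_singleton]⟩

theorem additivityMeagre_le_coveringMeagre : additivityMeagre ≤ coveringMeagre := by
  obtain ⟨𝒞, h𝒞⟩ := exists_isMeagre_cover
  refine le_csInf ⟨_, 𝒞, rfl, h𝒞⟩ ?_
  rintro c ⟨𝒜, rfl, h𝒜, hU⟩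
  exact additivityMeagre_le_mk h𝒜 (hU ▸ not_isMeagre_of_isOpen isOpen_univ univ_nonempty)

theorem additivityMeagre_le_boundingNumber : additivityMeagre ≤ boundingNumber := by
  refine le_csInf ⟨_, Set.univ, rfl, fun g => ⟨g, mem_univ g, fun h =>
    h.exists.elim fun k => lt_irrefl _⟩⟩ ?_
  rintro c ⟨F, rfl, hF⟩
  let 𝒜 := (fun f => cantorCode ⁻¹' gapBounded (partialSups f)) '' F
  have h𝒜 : ∀ A ∈ 𝒜, IsMeagre A := forall_mem_image.2 fun f _ =>
    isDenseInducing_cantorCode.isMeagre_preimage (isMeagre_gapBounded _)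
  have hU : ¬ IsMeagre (⋃₀ 𝒜) := by
    rw [sUnion_image, ← preimage_iUnion₂]
    exact not_isMeagre_preimage_cantorCode_biUnion_gapBounded hF
  exact (additivityMeagre_le_mk h𝒜 hU).trans mk_image_le

theorem exists_eventually_lt_of_mk_lt_boundingNumber {ι : Type} (hι : #ι < boundingNumber)
    (e : ι → ℕ → ℕ) : ∃ h : ℕ → ℕ, ∀ a, ∀ᶠ m in atTop, e a m < h m := by
  by_contra H
  simp only [not_exists, not_forall] at H
  refine ((boundingNumber_le_mk (F := range e) fun g => ?_).trans mk_range_le).not_gt hι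
  obtain ⟨a, ha⟩ := H g
  exact ⟨e a, mem_range_self a, ha⟩

theorem exists_forall_notMem_of_mk_lt_coveringMeagre {ι : Type} (hι : #ι < coveringMeagre)
    {E : ι → Set (ℕ → ℕ)} (hE : ∀ a, IsMeagre (E a)) : ∃ g, ∀ a, g ∉ E a := by
  by_contra H
  simp only [not_exists, not_forall, not_not] at H
  refine ((coveringMeagre_le_mk (𝒜 := range E) (forall_mem_range.2 hE)
    (eq_univ_of_forall fun g => ?_)).trans mk_range_le).not_gt hι
  obtain ⟨a, ha⟩ := H g
  exact ⟨E a, mem_range_self a, ha⟩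

theorem isMeagre_sUnion_of_mk_lt {𝒜 : Set (Set (ℕ → ℕ))} (h𝒜 : ∀ A ∈ 𝒜, IsMeagre A)
    (hb : #𝒜 < boundingNumber) (hc : #𝒜 < coveringMeagre) : IsMeagre (⋃₀ 𝒜) := by
  have hU : IsMeagre (⋃ A : 𝒜, cantorCode '' A) := by
    refine isMeagre_iUnion_of_bounded_of_not_covering
      (fun A => isInducing_cantorCode.isMeagre_image (h𝒜 A A.2))
      (exists_eventually_lt_of_mk_lt_boundingNumber hb) fun E hE => ?_
    obtain ⟨g, hg⟩ := exists_forall_notMem_of_mk_lt_coveringMeagre hc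
      fun a => isDenseInducing_cantorCode.isMeagre_preimage (hE a)
    exact ⟨cantorCode g, hg⟩
  refine (isDenseInducing_cantorCode.isMeagre_preimage hU).mono ?_
  rintro g ⟨A, hA, hgA⟩
  exact mem_iUnion.2 ⟨⟨A, hA⟩, g, hgA, rfl⟩

theorem min_le_additivityMeagre : min boundingNumber coveringMeagre ≤ additivityMeagre := by
  obtain ⟨𝒞, h𝒞, h𝒞U⟩ := exists_isMeagre_cover
  refine le_csInf ⟨_, 𝒞, rfl, h𝒞, h𝒞U ▸ not_isMeagre_of_isOpen isOpen_univ univ_nonempty⟩ ?_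
  rintro c ⟨𝒜, rfl, h𝒜, hnm⟩
  by_contra! hlt
  rw [lt_min_iff] at hlt
  exact hnm (isMeagre_sUnion_of_mk_lt h𝒜 hlt.1 hlt.2)

/-- add(M) = min{b, cov(M)} on Baire space. -/
theorem stmt14 :
    sInf {c : Cardinal | ∃ 𝒜 : Set (Set (ℕ → ℕ)), #𝒜 = c ∧
        (∀ A ∈ 𝒜, IsMeagre A) ∧ ¬ IsMeagre (⋃₀ 𝒜)} =
      min
        (sInf {c : Cardinal | ∃ F : Set (ℕ → ℕ), #F = c ∧
          ∀ g : ℕ → ℕ, ∃ f ∈ F, ¬ ∀ᶠ k in atTop, f k < g k})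
        (sInf {c : Cardinal | ∃ 𝒜 : Set (Set (ℕ → ℕ)), #𝒜 = c ∧
          (∀ A ∈ 𝒜, IsMeagre A) ∧ ⋃₀ 𝒜 = Set.univ}) :=
  le_antisymm (le_min additivityMeagre_le_boundingNumber additivityMeagre_le_coveringMeagre)
    min_le_additivityMeagre
end

section
/- cof(M) = max{d, non(M)}, where cof(M) is the least cardinality of a family of meager subsets of ω^ω cofinal in the meager ideal under inclusion, d is the least cardinality of a <*-dominating family in ω^ω, and non(M) is the least cardinality of a non-meager subset of ω^ω. -/
/-!
Code a point `z` of Baire space as the binary sequence `0^(z 0) 1 0^(z 1) 1 ⋯`. This is a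
topological embedding of `ℕ → ℕ` into `ℕ → Bool` whose range is co-countable, so meagre sets can be
moved to Cantor space and back. There every meagre set is contained in a set
`{z | z ≠ y on [g n, g (n + 1)) for almost all n}` for some `y` and some interval partition `g`.

Lower bound: if the set of this form for `(y, g)` contains the one for `(false, H)`, then almost
every interval of `g` contains an interval of `H`; choosing `H` with long intervals, the end of the
next-but-one `g`-interval dominates a given function. So a cofinal family of meagre sets yields a
dominating family of the same size, and a point outside each member yields a non-meagre set.

Upper bound: fix a dominating `D` and a non-meagre `S`. For a meagre set with witness `(y, g)`, take
`h ∈ D` so that almost every interval of the partition built from `h` contains a `g`-interval, and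
`φ ∈ S` that infinitely often guesses the code of the prefix of `y` up to the end of the `n`-th such
interval. Copying the guess `φ n` on the `n`-th interval gives a point `x` that agrees with `y` on
infinitely many `g`-intervals, and `h' ∈ D` dominating the distance to the next correct guess makes
every window `[k, h' k)` contain one of them. Hence the meagre sets indexed by `S × D × D` are
cofinal.
-/

open Filter Set Cardinal Topology PiNat

section Cylinders

variable {α : Type*} [TopologicalSpace α] [DiscreteTopology α]

lemma hasBasis_nhds_cylinder (x : ℕ → α) : (𝓝 x).HasBasis (fun _ => True) (cylinder x) := by
  refine ⟨fun U => ⟨fun hU => ?_, fun ⟨n, _, hn⟩ =>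
    mem_of_superset ((isOpen_cylinder _ x n).mem_nhds (self_mem_cylinder x n)) hn⟩⟩
  obtain ⟨_, ⟨y, n, rfl⟩, hx, hsub⟩ := (isTopologicalBasis_cylinders _).mem_nhds_iff.1 hU
  exact ⟨n, trivial, (mem_cylinder_iff_eq.1 hx).symm ▸ hsub⟩

lemma dense_of_forall_cylinder {s : Set (ℕ → α)} (h : ∀ x n, ∃ y ∈ s, y ∈ cylinder x n) :
    Dense s := by
  refine (isTopologicalBasis_cylinders _).dense_iff.2 ?_
  rintro _ ⟨x, n, rfl⟩ -
  obtain ⟨y, hys, hy⟩ := h x n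
  exact ⟨y, hy, hys⟩

lemma Dense.exists_cylinder_subset {U : Set (ℕ → α)} (hUd : Dense U) (hUo : IsOpen U)
    (v : ℕ → α) (L : ℕ) : ∃ v' ∈ cylinder v L, ∃ L' ≥ L, cylinder v' L' ⊆ U := by
  obtain ⟨v', hv', hv'U⟩ :=
    hUd.inter_open_nonempty _ (isOpen_cylinder _ v L) ⟨v, self_mem_cylinder v L⟩
  obtain ⟨n, -, hn⟩ := (hasBasis_nhds_cylinder v').mem_iff.1 (hUo.mem_nhds hv'U)
  exact ⟨v', hv', max n L, le_max_right _ _, (cylinder_anti v' (le_max_left _ _)).trans hn⟩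

lemma isOpen_setOf_eqOn_Ico (x : ℕ → α) (a b : ℕ) : IsOpen {z : ℕ → α | EqOn z x (Ico a b)} :=
  isOpen_iff_mem_nhds.2 fun z hz => (hasBasis_nhds_cylinder z).mem_iff.2
    ⟨b, trivial, fun _ hw k hk => (hw k hk.2).trans (hz hk)⟩

lemma isMeagre_singleton_pi [Nontrivial α] (x : ℕ → α) : IsMeagre {x} := by
  refine residual_of_dense_open isClosed_singleton.isOpen_compl
    (dense_compl_singleton_iff_not_open.2 fun hx => ?_)
  obtain ⟨n, -, hn⟩ := (hasBasis_nhds_cylinder x).mem_iff.1 (hx.mem_nhds rfl)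
  obtain ⟨b, hb⟩ := exists_ne (x n)
  exact hb (by simpa using congrFun (hn (update_mem_cylinder x n b)) n)

lemma isMeagre_of_countable [Nontrivial α] {C : Set (ℕ → α)} (hC : C.Countable) :
    IsMeagre C := by
  simpa using isMeagre_biUnion hC fun x _ => isMeagre_singleton_pi x

end Cylinders

section Mismatch

variable {α : Type*}

def eventuallyMismatch (x : ℕ → α) (L R : ℕ → ℕ) : Set (ℕ → α) :=
  {z | ∀ᶠ n in atTop, ¬EqOn z x (Ico (L n) (R n))}

variable [TopologicalSpace α] [DiscreteTopology α]

theorem isMeagre_eventuallyMismatch (x : ℕ → α) {L : ℕ → ℕ} (hL : Tendsto L atTop atTop)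
    (R : ℕ → ℕ) : IsMeagre (eventuallyMismatch x L R) := by
  have hdense (N : ℕ) : Dense (⋃ n ≥ N, {z | EqOn z x (Ico (L n) (R n))}) := by
    refine dense_of_forall_cylinder fun x₀ b => ?_
    obtain ⟨n, hbn, hNn⟩ := ((hL.eventually_ge_atTop b).and (eventually_ge_atTop N)).exists
    refine ⟨fun k => if k < b then x₀ k else x k, mem_iUnion₂.2 ⟨n, hNn, fun k hk => ?_⟩,
      fun k hk => if_pos hk⟩
    exact if_neg (by simp only [mem_Ico] at hk; omega)
  refine mem_of_superset (countable_iInter_mem.2 fun N => residual_of_dense_open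
    (isOpen_biUnion fun n _ => isOpen_setOf_eqOn_Ico x _ _) (hdense N)) fun z hz hzM => ?_
  obtain ⟨N, hN⟩ := eventually_atTop.1 hzM
  obtain ⟨n, hn, hzn⟩ := mem_iUnion₂.1 (mem_iInter.1 hz N)
  exact hN n hn hzn

lemma exists_frequently_eq_of_not_isMeagre {S : Set (ℕ → α)} (hS : ¬IsMeagre S) (G : ℕ → α) :
    ∃ φ ∈ S, ∃ᶠ n in atTop, φ n = G n := by
  by_contra! h
  refine hS ((isMeagre_eventuallyMismatch G tendsto_id (· + 1)).mono fun φ hφ => ?_)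
  filter_upwards [h φ hφ] with n hn heq using hn (heq ⟨le_rfl, lt_add_one n⟩)

end Mismatch

theorem IsMeagre.exists_isOpen_dense_eventually_notMem {X : Type*} [TopologicalSpace X]
    [BaireSpace X] {A : Set X} (hA : IsMeagre A) :
    ∃ V : ℕ → Set X, (∀ n, IsOpen (V n)) ∧ (∀ n, Dense (V n)) ∧
      ∀ a ∈ A, ∀ᶠ n in atTop, a ∉ V n := by
  obtain ⟨t, htA, htG, htd⟩ := mem_residual.1 hA
  obtain ⟨U, hUo, rfl⟩ := isGδ_iff_eq_iInter_nat.1 htG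
  refine ⟨fun n => ⋂ m ∈ Finset.range (n + 1), U m,
    fun n => isOpen_biInter_finset fun m _ => hUo m,
    fun n => htd.mono fun a ha => mem_iInter₂.2 fun m _ => mem_iInter.1 ha m, fun a ha => ?_⟩
  obtain ⟨m, hm⟩ : ∃ m, a ∉ U m := by simpa using fun h => htA h ha
  filter_upwards [eventually_ge_atTop m] with n hn ha'
  exact hm (mem_iInter₂.1 ha' m (Finset.mem_range.2 (by omega)))

section BlockIdx

variable {u : ℕ → ℕ}

def blockIdx (u : ℕ → ℕ) (k : ℕ) : ℕ := Nat.findGreatest (fun n => u n ≤ k) k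

lemma blockIdx_eq (hu : StrictMono u) {n k : ℕ} (h₁ : u n ≤ k) (h₂ : k < u (n + 1)) :
    blockIdx u k = n :=
  Nat.findGreatest_eq_iff.2 ⟨(hu.le_apply).trans h₁, fun _ => h₁, fun _ hnm _ hm =>
    (h₂.trans_le ((hu.monotone (Nat.succ_le_of_lt hnm)).trans hm)).false⟩

lemma blockIdx_spec (hu : StrictMono u) (h0 : u 0 = 0) (k : ℕ) :
    u (blockIdx u k) ≤ k ∧ k < u (blockIdx u k + 1) := by
  refine ⟨Nat.findGreatest_spec (P := fun n => u n ≤ k) (Nat.zero_le k)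
    (by rw [h0]; exact Nat.zero_le k), not_le.1 fun h => ?_⟩
  by_cases hk : blockIdx u k + 1 ≤ k
  · exact Nat.findGreatest_is_greatest (lt_add_one _) hk h
  · exact hk (hu.le_apply.trans h)

end BlockIdx

section CantorSpace

variable {α : Type*} [TopologicalSpace α] [DiscreteTopology α] [Finite α] [Nonempty α]

theorem exists_forcing_block {U : Set (ℕ → α)} (hUo : IsOpen U) (hUd : Dense U) (L : ℕ) :
    ∃ L' > L, ∃ w : ℕ → α, ∀ z, EqOn z w (Ico L L') → z ∈ U := by
  classical
  have : Fintype (Fin L → α) := Fintype.ofFinite _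
  -- Treat the finitely many possible values on `[0, L)` one at a time, lengthening the block.
  suffices key : ∀ F : Finset (Fin L → α), ∃ L' ≥ L, ∃ w : ℕ → α,
      ∀ z, (fun i : Fin L => z i) ∈ F → EqOn z w (Ico L L') → z ∈ U by
    obtain ⟨L', hL', w, hw⟩ := key Finset.univ
    exact ⟨L' + 1, by omega, w, fun z hz =>
      hw z (Finset.mem_univ _) (hz.mono (Ico_subset_Ico_right (by omega)))⟩
  intro F
  induction F using Finset.induction_on with
  | empty =>
    exact ⟨L, le_rfl, fun _ => Classical.arbitrary α, fun z hz => absurd hz (Finset.notMem_empty _)⟩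
  | insert s F _ ih =>
    obtain ⟨L₁, hL₁, w₁, hw₁⟩ := ih
    obtain ⟨v, hv, L₂, hL₂, hvU⟩ :=
      hUd.exists_cylinder_subset hUo (fun i => if h : i < L then s ⟨i, h⟩ else w₁ i) L₁
    refine ⟨L₂, hL₁.trans hL₂, v, fun z hzF hzv => ?_⟩
    rcases Finset.mem_insert.1 hzF with hzs | hzF
    · refine hvU fun i hi => ?_
      by_cases hiL : i < L
      · rw [hv i (hiL.trans_le hL₁)]
        simp [hiL, ← hzs]
      · exact hzv ⟨not_lt.1 hiL, hi⟩
    · refine hw₁ z hzF fun i hi => ?_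
      rw [hzv ⟨hi.1, hi.2.trans_le hL₂⟩, hv i hi.2]
      simp [not_lt.2 hi.1]

theorem IsMeagre.subset_eventuallyMismatch {A : Set (ℕ → α)} (hA : IsMeagre A) :
    ∃ (y : ℕ → α) (g : ℕ → ℕ), StrictMono g ∧ g 0 = 0 ∧
      A ⊆ eventuallyMismatch y g (fun n => g (n + 1)) := by
  obtain ⟨V, hVo, hVd, hAV⟩ := hA.exists_isOpen_dense_eventually_notMem
  choose next hnext w hw using fun n L => exists_forcing_block (hVo n) (hVd n) L
  let g : ℕ → ℕ := fun n => Nat.rec 0 (fun n L => next n L) n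
  have hg : StrictMono g := strictMono_nat_of_lt_succ fun n => hnext n (g n)
  refine ⟨fun k => w (blockIdx g k) (g (blockIdx g k)) k, g, hg, rfl, fun z hz => ?_⟩
  filter_upwards [hAV z hz] with n hn hzy
  refine hn (hw n (g n) z fun k hk => ?_)
  rw [hzy hk]
  dsimp only
  rw [blockIdx_eq hg hk.1 hk.2]

end CantorSpace

theorem Topology.IsInducing.isMeagre_preimage {X Y : Type*} [TopologicalSpace X]
    [TopologicalSpace Y] {f : X → Y} (hf : IsInducing f) (hd : DenseRange f) {s : Set Y}
    (hs : IsMeagre s) : IsMeagre (f ⁻¹' s) := by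
  have hdense {U : Set Y} (hUo : IsOpen U) (hUd : Dense U) : Dense (f ⁻¹' U) := by
    rw [Dense, hf.closure_eq_preimage_closure_image, image_preimage_eq_inter_range,
      (hUd.inter_of_isOpen_left hd hUo).closure_eq, preimage_univ]
    exact fun _ => trivial
  obtain ⟨S, hSo, hSd, hSc, hS⟩ := mem_residual_iff.1 hs
  refine mem_of_superset ((countable_bInter_mem hSc).2 fun U hU =>
    residual_of_dense_open ((hSo U hU).preimage hf.continuous) (hdense (hSo U hU) (hSd U hU))) ?_
  exact fun x hx => hS (mem_sInter.2 fun U hU => mem_iInter₂.1 hx U hU)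

section Coding

def onePos (z : ℕ → ℕ) (n : ℕ) : ℕ := ∑ i ∈ Finset.range (n + 1), z i + n

/-- `toCantor z` is `0^(z 0) 1 0^(z 1) 1 ⋯`; its `n`-th `1` sits at `onePos z n`. -/
def toCantor (z : ℕ → ℕ) (k : ℕ) : Bool := decide (∃ n ≤ k, onePos z n = k)

variable {z z' : ℕ → ℕ}

lemma onePos_succ (z : ℕ → ℕ) (n : ℕ) : onePos z (n + 1) = onePos z n + z (n + 1) + 1 := by
  simp only [onePos, Finset.sum_range_succ _ (n + 1)]
  omega

lemma strictMono_onePos (z : ℕ → ℕ) : StrictMono (onePos z) :=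
  strictMono_nat_of_lt_succ fun n => by rw [onePos_succ]; omega

lemma onePos_lt_onePos_iff {n : ℕ} (h : z' ∈ cylinder z n) :
    onePos z' n < onePos z n ↔ z' n < z n := by
  have hsum : ∑ i ∈ Finset.range n, z' i = ∑ i ∈ Finset.range n, z i :=
    Finset.sum_congr rfl fun i hi => h i (Finset.mem_range.1 hi)
  rw [onePos, onePos, Finset.sum_range_succ, Finset.sum_range_succ, hsum]
  omega

lemma onePos_eq_of_mem_cylinder {n : ℕ} (h : z' ∈ cylinder z (n + 1)) :
    onePos z' n = onePos z n := by
  simp only [onePos, Finset.sum_congr rfl fun i hi => h i (Finset.mem_range.1 hi)]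

lemma toCantor_eq_true_iff {k : ℕ} : toCantor z k = true ↔ k ∈ range (onePos z) := by
  simp only [toCantor, decide_eq_true_iff, mem_range]
  exact ⟨fun ⟨n, _, hn⟩ => ⟨n, hn⟩, fun ⟨n, hn⟩ => ⟨n, hn ▸ (strictMono_onePos z).le_apply, hn⟩⟩

lemma continuous_toCantor : Continuous toCantor := by
  refine continuous_iff_continuousAt.2 fun z => ((hasBasis_nhds_cylinder z).tendsto_iff
    (hasBasis_nhds_cylinder _)).2 fun N _ => ⟨N, trivial, fun z' hz' k hk => ?_⟩
  refine decide_eq_decide.2 (exists_congr fun n => and_congr_right fun hn => ?_)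
  rw [onePos_eq_of_mem_cylinder (cylinder_anti z (by omega) hz')]

lemma toCantor_ne_of_onePos_lt {i : ℕ} (h : z' ∈ cylinder z i) (hlt : onePos z' i < onePos z i) :
    toCantor z' (onePos z' i) ≠ toCantor z (onePos z' i) := by
  intro heq
  rw [toCantor_eq_true_iff.2 ⟨i, rfl⟩, eq_comm, toCantor_eq_true_iff] at heq
  obtain ⟨j, hj⟩ := heq
  have hji : j < i := (strictMono_onePos z).lt_iff_lt.1 (hj ▸ hlt)
  have := onePos_eq_of_mem_cylinder (cylinder_anti z hji h)
  exact ((strictMono_onePos z') hji).ne (this.trans hj)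

lemma apply_eq_of_toCantor_eq {i : ℕ} (h : z' ∈ cylinder z i)
    (hc : ∀ k ≤ onePos z i, toCantor z' k = toCantor z k) : z' i = z i := by
  rcases lt_trichotomy (z' i) (z i) with hlt | heq | hgt
  · have hlt' := (onePos_lt_onePos_iff h).2 hlt
    exact absurd (hc _ hlt'.le) (toCantor_ne_of_onePos_lt h hlt')
  · exact heq
  · have h' := (mem_cylinder_comm z z' i).1 h
    exact absurd (hc _ le_rfl).symm (toCantor_ne_of_onePos_lt h' ((onePos_lt_onePos_iff h').2 hgt))

lemma isInducing_toCantor : IsInducing toCantor := by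
  refine isInducing_iff_nhds.2 fun z => le_antisymm (continuous_toCantor.tendsto z).le_comap ?_
  refine (hasBasis_nhds_cylinder z).ge_iff.2 fun n _ => mem_comap.2
    ⟨_, (isOpen_cylinder _ _ (onePos z n + 1)).mem_nhds (self_mem_cylinder _ _), fun z' hz' => ?_⟩
  suffices ∀ i ≤ n, z' ∈ cylinder z i from this n le_rfl
  intro i hi
  induction i with
  | zero => simp
  | succ i ih =>
    have ih := ih (by omega)
    have heq := apply_eq_of_toCantor_eq ih fun k hk =>
      hz' k (Nat.lt_succ_of_le (hk.trans ((strictMono_onePos z).monotone (by omega))))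
    exact fun j hj => (Nat.lt_succ_iff_lt_or_eq.1 hj).elim (ih j) fun e => e ▸ heq

lemma exists_onePos_eq {s : ℕ → ℕ} (hs : StrictMono s) : ∃ z, onePos z = s := by
  refine ⟨fun n => if n = 0 then s 0 else s n - s (n - 1) - 1, funext fun n => ?_⟩
  induction n with
  | zero => simp [onePos]
  | succ n ih =>
    rw [onePos_succ, ih]
    have := hs (lt_add_one n)
    simp only [Nat.add_one_ne_zero, if_false, Nat.add_sub_cancel]
    omega

lemma mem_range_toCantor {y : ℕ → Bool} (hy : {k | y k = true}.Infinite) :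
    y ∈ range toCantor := by
  obtain ⟨z, hz⟩ := exists_onePos_eq (Nat.nth_strictMono hy)
  refine ⟨z, funext fun k => Bool.eq_iff_iff.2 ?_⟩
  rw [toCantor_eq_true_iff, hz, Nat.range_nth_of_infinite hy]
  rfl

lemma isMeagre_compl_range_toCantor : IsMeagre (range toCantor)ᶜ := by
  have hinj : Function.Injective fun y : ℕ → Bool => {k | y k = true} :=
    fun y y' h => funext fun k => Bool.eq_iff_iff.2 (Set.ext_iff.1 h k)
  refine isMeagre_of_countable
    (((countable_ofPred_finite_subset countable_univ).preimage hinj).mono fun y hy => ?_)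
  exact ⟨not_infinite.1 fun h => hy (mem_range_toCantor h), subset_univ _⟩

lemma denseRange_toCantor : DenseRange toCantor :=
  dense_of_mem_residual (by simpa [IsMeagre] using isMeagre_compl_range_toCantor)

end Coding

section Partitions

def Engulfs (f H : ℕ → ℕ) (n : ℕ) : Prop := ∃ m, f n ≤ H m ∧ H (m + 1) ≤ f (n + 1)

lemma Set.Infinite.exists_seq_add_two_le {T : Set ℕ} (hT : T.Infinite) :
    ∃ σ : ℕ → ℕ, (∀ j, σ j ∈ T) ∧ ∀ j, σ j + 2 ≤ σ (j + 1) := by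
  refine ⟨fun j => Nat.nth (· ∈ T) (2 * j), fun j => Nat.nth_mem_of_infinite hT _, fun j => ?_⟩
  have h₁ : Nat.nth (· ∈ T) (2 * j) < Nat.nth (· ∈ T) (2 * j + 1) :=
    Nat.nth_strictMono hT (by omega)
  have h₂ : Nat.nth (· ∈ T) (2 * j + 1) < Nat.nth (· ∈ T) (2 * (j + 1)) :=
    Nat.nth_strictMono hT (by omega)
  dsimp only
  omega

lemma exists_Ico_subset_of_subset_iUnion {f σ : ℕ → ℕ} (hf : StrictMono f)
    (hσ : ∀ j, σ j + 2 ≤ σ (j + 1)) {a b : ℕ} (hab : a < b)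
    (hcov : Ico a b ⊆ ⋃ j, Ico (f (σ j)) (f (σ j + 1))) :
    ∃ j, f (σ j) ≤ a ∧ b ≤ f (σ j + 1) := by
  obtain ⟨j, hj⟩ := mem_iUnion.1 (hcov ⟨le_rfl, hab⟩)
  refine ⟨j, hj.1, not_lt.1 fun hlt => ?_⟩
  obtain ⟨j', hj'⟩ := mem_iUnion.1 (hcov ⟨hj.2.le, hlt⟩)
  have h₁ := hf.le_iff_le.1 hj'.1
  have h₂ := hf.lt_iff_lt.1 hj'.2
  have hσm : StrictMono σ := strictMono_nat_of_lt_succ fun j => by have := hσ j; omega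
  rcases lt_trichotomy j' j with h | rfl | h
  · have := hσm h; omega
  · omega
  · have := hσm.monotone (show j + 1 ≤ j' from h); have := hσ j; omega

theorem eventually_engulfs_of_eventuallyMismatch_subset {x x₀ : ℕ → Bool} {f H : ℕ → ℕ}
    (hf : StrictMono f) (hH : StrictMono H)
    (hsub : eventuallyMismatch x₀ H (fun m => H (m + 1)) ⊆
      eventuallyMismatch x f (fun n => f (n + 1))) :
    ∀ᶠ n in atTop, Engulfs f H n := by
  classical
  by_contra hbad
  -- Every other bad index: the chosen `f`-intervals are pairwise non-adjacent, so an `H`-interval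
  -- covered by their union lies inside one of them.
  obtain ⟨σ, hσT, hσ⟩ :=
    (Nat.frequently_atTop_iff_infinite.1 (not_eventually.1 hbad)).exists_seq_add_two_le
  have hσm : StrictMono σ := strictMono_nat_of_lt_succ fun j => by have := hσ j; omega
  set blocks := ⋃ j, Ico (f (σ j)) (f (σ j + 1))
  let z : ℕ → Bool := fun k => if k ∈ blocks then x k else !x₀ k
  have hzx : z ∉ eventuallyMismatch x f (fun n => f (n + 1)) := fun hz => by
    obtain ⟨N, hN⟩ := eventually_atTop.1 hz
    exact hN (σ N) hσm.le_apply fun k hk => if_pos (mem_iUnion.2 ⟨N, hk⟩)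
  refine hzx (hsub (Eventually.of_forall fun m hm => ?_))
  have hcov : Ico (H m) (H (m + 1)) ⊆ blocks := fun k hk => by
    by_contra hk'
    simpa [z, hk'] using hm hk
  obtain ⟨j, hj⟩ := exists_Ico_subset_of_subset_iUnion hf hσ (hH (lt_add_one m)) hcov
  exact hσT j ⟨m, hj⟩

def intervalPartition (h : ℕ → ℕ) : ℕ → ℕ
  | 0 => 0
  | n + 1 => intervalPartition h n + h (intervalPartition h n) + 1

lemma strictMono_intervalPartition (h : ℕ → ℕ) : StrictMono (intervalPartition h) :=
  strictMono_nat_of_lt_succ fun n => by simp only [intervalPartition]; omega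

theorem eventually_lt_of_eventually_engulfs {f h : ℕ → ℕ} (hf : StrictMono f) (hf0 : f 0 = 0)
    (hh : Monotone h) (heng : ∀ᶠ n in atTop, Engulfs f (intervalPartition h) n) :
    ∀ᶠ k in atTop, h k < f (blockIdx f k + 2) := by
  obtain ⟨N, hN⟩ := eventually_atTop.1 heng
  filter_upwards [eventually_ge_atTop (f N)] with k hk
  obtain ⟨-, hki⟩ := blockIdx_spec hf hf0 k
  obtain ⟨m, hm₁, hm₂⟩ := hN (blockIdx f k + 1) (hf.lt_iff_lt.1 (hk.trans_lt hki)).le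
  calc h k ≤ h (intervalPartition h m) := hh (hki.le.trans hm₁)
    _ < intervalPartition h (m + 1) := by simp only [intervalPartition]; omega
    _ ≤ f (blockIdx f k + 2) := hm₂

theorem eventually_engulfs_of_eventually_lt {g h : ℕ → ℕ} (hg : StrictMono g) (hg0 : g 0 = 0)
    (hlt : ∀ᶠ k in atTop, g (blockIdx g k + 2) < h k) :
    ∀ᶠ n in atTop, Engulfs (intervalPartition h) g n := by
  obtain ⟨K, hK⟩ := eventually_atTop.1 hlt
  filter_upwards [eventually_ge_atTop K] with n hn
  obtain ⟨-, hki⟩ := blockIdx_spec hg hg0 (intervalPartition h n)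
  have := hK _ (hn.trans (strictMono_intervalPartition h).le_apply)
  refine ⟨blockIdx g (intervalPartition h n) + 1, hki.le, ?_⟩
  show g (_ + 2) ≤ _ + _ + 1
  omega

end Partitions

def IsDominating (D : Set (ℕ → ℕ)) : Prop := ∀ f : ℕ → ℕ, ∃ g ∈ D, ∀ᶠ k in atTop, f k < g k

def IsMeagreBase {X : Type*} [TopologicalSpace X] (𝒜 : Set (Set X)) : Prop :=
  (∀ A ∈ 𝒜, IsMeagre A) ∧ ∀ B : Set X, IsMeagre B → ∃ A ∈ 𝒜, B ⊆ A

lemma aleph0_le_mk_of_not_isMeagre {α : Type*} [TopologicalSpace α] [DiscreteTopology α]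
    [Nontrivial α] {S : Set (ℕ → α)} (hS : ¬IsMeagre S) : ℵ₀ ≤ #S := by
  by_contra! hfin
  exact hS (isMeagre_of_countable (lt_aleph0_iff_set_finite.1 hfin).countable)

lemma aleph0_le_mk_of_isDominating {D : Set (ℕ → ℕ)} (hD : IsDominating D) : ℵ₀ ≤ #D := by
  by_contra! hfin
  have hD' := lt_aleph0_iff_set_finite.1 hfin
  obtain ⟨g, hgD, hg⟩ := hD fun k => hD'.toFinset.sup fun g => g k
  obtain ⟨k, hk⟩ := hg.exists
  exact hk.not_ge (Finset.le_sup (f := fun g : ℕ → ℕ => g k) (hD'.mem_toFinset.2 hgD))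

section UpperBound

noncomputable def prefixCode (y : ℕ → Bool) (N : ℕ) : ℕ :=
  Encodable.encode ((Finset.range N).filter fun i => y i = true)

noncomputable def decodeAlong (φ h : ℕ → ℕ) (k : ℕ) : Bool :=
  decide (k ∈ ((Encodable.decode (φ (blockIdx (intervalPartition h) k)) :
    Option (Finset ℕ)).getD ∅))

lemma decodeAlong_eq_of_eq_prefixCode {φ h : ℕ → ℕ} {y : ℕ → Bool} {n k : ℕ}
    (hφ : φ n = prefixCode y (intervalPartition h (n + 1)))
    (hk : k ∈ Ico (intervalPartition h n) (intervalPartition h (n + 1))) :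
    decodeAlong φ h k = y k := by
  simp [decodeAlong, blockIdx_eq (strictMono_intervalPartition h) hk.1 hk.2, hφ, prefixCode, hk.2]

theorem IsMeagre.subset_eventuallyMismatch_decodeAlong {S D : Set (ℕ → ℕ)} (hS : ¬IsMeagre S)
    (hD : IsDominating D) {B : Set (ℕ → Bool)} (hB : IsMeagre B) :
    ∃ φ ∈ S, ∃ h ∈ D, ∃ h' ∈ D, B ⊆ eventuallyMismatch (decodeAlong φ h) id h' := by
  obtain ⟨y, g, hg, hg0, hBy⟩ := hB.subset_eventuallyMismatch
  obtain ⟨h, hhD, hh⟩ := hD fun k => g (blockIdx g k + 2)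
  set P := intervalPartition h
  obtain ⟨φ, hφS, hφ⟩ := exists_frequently_eq_of_not_isMeagre hS fun n => prefixCode y (P (n + 1))
  set C := {n | φ n = prefixCode y (P (n + 1)) ∧ Engulfs P g n}
  have hC : C.Infinite := Nat.frequently_atTop_iff_infinite.1
    (hφ.and_eventually (eventually_engulfs_of_eventually_lt hg hg0 hh))
  -- On the `n`-th interval of `P` with `n ∈ C`, `decodeAlong φ h` copies `y` on a whole
  -- `g`-interval; `h'` makes the window `[k, h' k)` reach past the `k`-th element of `C`.
  obtain ⟨h', hh'D, hh'⟩ := hD fun k => P (Nat.nth (· ∈ C) k + 1)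
  refine ⟨φ, hφS, h, hhD, h', hh'D, fun z hz => ?_⟩
  obtain ⟨N, hN⟩ := eventually_atTop.1 (hBy hz)
  filter_upwards [hh', eventually_ge_atTop (g N)] with k hkh' hkN hzx
  obtain ⟨hφn, m, hm₁, hm₂⟩ : Nat.nth (· ∈ C) k ∈ C := Nat.nth_mem_of_infinite hC k
  have hkn : k ≤ P (Nat.nth (· ∈ C) k) :=
    (Nat.nth_strictMono hC).le_apply.trans (strictMono_intervalPartition h).le_apply
  refine hN m (hg.le_iff_le.1 (hkN.trans (hkn.trans hm₁))) fun i hi => ?_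
  rw [hzx ⟨hkn.trans (hm₁.trans hi.1), hi.2.trans_le (hm₂.trans hkh'.le)⟩,
    decodeAlong_eq_of_eq_prefixCode hφn ⟨hm₁.trans hi.1, hi.2.trans_le hm₂⟩]

theorem exists_isMeagreBase_mk_le {S D : Set (ℕ → ℕ)} (hS : ¬IsMeagre S) (hD : IsDominating D) :
    ∃ 𝒜 : Set (Set (ℕ → ℕ)), IsMeagreBase 𝒜 ∧ #𝒜 ≤ #(S × D × D) := by
  let F : S × D × D → Set (ℕ → ℕ) := fun p =>
    toCantor ⁻¹' eventuallyMismatch (decodeAlong p.1 p.2.1) id p.2.2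
  refine ⟨range F, ⟨?_, fun B hB => ?_⟩, mk_range_le⟩
  · rintro _ ⟨p, rfl⟩
    exact isInducing_toCantor.isMeagre_preimage denseRange_toCantor
      (isMeagre_eventuallyMismatch _ tendsto_id _)
  · obtain ⟨φ, hφ, h, hh, h', hh', hsub⟩ :=
      (isInducing_toCantor.isMeagre_image hB).subset_eventuallyMismatch_decodeAlong hS hD
    exact ⟨F (⟨φ, hφ⟩, ⟨h, hh⟩, ⟨h', hh'⟩), mem_range_self _, image_subset_iff.1 hsub⟩

end UpperBound

section LowerBound

theorem exists_isDominating_mk_le {𝒜 : Set (Set (ℕ → ℕ))} (h𝒜 : IsMeagreBase 𝒜) :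
    ∃ D, IsDominating D ∧ #D ≤ #𝒜 := by
  have hcode (A : 𝒜) : IsMeagre (toCantor '' A ∪ (range toCantor)ᶜ) :=
    (isInducing_toCantor.isMeagre_image (h𝒜.1 A A.2)).union isMeagre_compl_range_toCantor
  choose x f hf hf0 hsub using fun A => (hcode A).subset_eventuallyMismatch
  refine ⟨range fun A k => f A (blockIdx (f A) k + 2), fun h₀ => ?_, mk_range_le⟩
  let h k := (Finset.range (k + 1)).sup h₀
  have hmono : Monotone h := fun a b hab => Finset.sup_mono (Finset.range_subset_range.2 (by omega))
  set H := intervalPartition h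
  have hM := isMeagre_eventuallyMismatch (fun _ => false)
    (strictMono_intervalPartition h).tendsto_atTop (fun m => H (m + 1))
  obtain ⟨A, hA, hMA⟩ := h𝒜.2 _ (isInducing_toCantor.isMeagre_preimage denseRange_toCantor hM)
  have hMsub : eventuallyMismatch (fun _ => false) H (fun m => H (m + 1)) ⊆
      toCantor '' A ∪ (range toCantor)ᶜ := fun y hy =>
    (em (y ∈ range toCantor)).elim
      (fun ⟨z, hz⟩ => Or.inl ⟨z, hMA (by rwa [mem_preimage, hz]), hz⟩) Or.inr
  refine ⟨_, mem_range_self ⟨A, hA⟩, ?_⟩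
  filter_upwards [eventually_lt_of_eventually_engulfs (hf _) (hf0 _) hmono
    (eventually_engulfs_of_eventuallyMismatch_subset (hf _) (strictMono_intervalPartition h)
      (hMsub.trans (hsub ⟨A, hA⟩)))] with k hk
  exact (Finset.le_sup (Finset.self_mem_range_succ k)).trans_lt hk

theorem exists_not_isMeagre_mk_le {X : Type*} [TopologicalSpace X] [BaireSpace X] [Nonempty X]
    {𝒜 : Set (Set X)} (h𝒜 : IsMeagreBase 𝒜) : ∃ S : Set X, ¬IsMeagre S ∧ #S ≤ #𝒜 := by
  have (A : 𝒜) : ∃ x, x ∉ (A : Set X) := (dense_of_mem_residual (h𝒜.1 A A.2)).nonempty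
  choose p hp using this
  refine ⟨range p, fun hS => ?_, mk_range_le⟩
  obtain ⟨A, hA, hsub⟩ := h𝒜.2 _ hS
  exact hp ⟨A, hA⟩ (hsub (mem_range_self _))

end LowerBound

noncomputable def minCard {α : Type*} (P : Set α → Prop) : Cardinal :=
  sInf {c | ∃ s : Set α, #s = c ∧ P s}

lemma minCard_le {α : Type*} {P : Set α → Prop} {s : Set α} (hs : P s) : minCard P ≤ #s :=
  csInf_le' ⟨s, rfl, hs⟩

lemma exists_mk_eq_minCard {α : Type*} {P : Set α → Prop} {s : Set α} (hs : P s) :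
    ∃ t, P t ∧ #t = minCard P := by
  obtain ⟨t, ht, hPt⟩ := csInf_mem (⟨#s, s, rfl, hs⟩ : {c | ∃ s : Set α, #s = c ∧ P s}.Nonempty)
  exact ⟨t, hPt, ht⟩

/-- cof(M) = max{d, non(M)} on Baire space. -/
theorem stmt15 :
    sInf {c : Cardinal | ∃ 𝒜 : Set (Set (ℕ → ℕ)), #𝒜 = c ∧
        (∀ A ∈ 𝒜, IsMeagre A) ∧ ∀ B : Set (ℕ → ℕ), IsMeagre B → ∃ A ∈ 𝒜, B ⊆ A} =
      max
        (sInf {c : Cardinal | ∃ D : Set (ℕ → ℕ), #D = c ∧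
          ∀ f : ℕ → ℕ, ∃ g ∈ D, ∀ᶠ k in atTop, f k < g k})
        (sInf {c : Cardinal | ∃ S : Set (ℕ → ℕ), #S = c ∧ ¬ IsMeagre S}) := by
  show minCard IsMeagreBase =
    max (minCard IsDominating) (minCard fun S : Set (ℕ → ℕ) => ¬IsMeagre S)
  obtain ⟨𝒜, h𝒜, h𝒜c⟩ := exists_mk_eq_minCard (P := IsMeagreBase)
    (s := {A : Set (ℕ → ℕ) | IsMeagre A}) ⟨fun _ hA => hA, fun B hB => ⟨B, hB, subset_rfl⟩⟩
  obtain ⟨D, hD, hDc⟩ := exists_mk_eq_minCard (P := IsDominating) (s := univ)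
    fun f => ⟨fun k => f k + 1, mem_univ _, Eventually.of_forall fun k => lt_add_one _⟩
  obtain ⟨S, hS, hSc⟩ := exists_mk_eq_minCard (P := fun S : Set (ℕ → ℕ) => ¬IsMeagre S)
    (not_isMeagre_of_isOpen isOpen_univ univ_nonempty)
  rw [← h𝒜c, ← hDc, ← hSc]
  apply le_antisymm
  · obtain ⟨𝒜', h𝒜', hcard⟩ := exists_isMeagreBase_mk_le hS hD
    calc #𝒜 ≤ #𝒜' := h𝒜c.trans_le (minCard_le h𝒜')
      _ ≤ #(S × D × D) := hcard
      _ = max #D #S := by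
        simp only [mk_prod, lift_id]
        rw [mul_eq_self (aleph0_le_mk_of_isDominating hD),
          mul_eq_max (aleph0_le_mk_of_not_isMeagre hS) (aleph0_le_mk_of_isDominating hD), max_comm]
  · obtain ⟨D', hD', hD'c⟩ := exists_isDominating_mk_le h𝒜
    obtain ⟨S', hS', hS'c⟩ := exists_not_isMeagre_mk_le h𝒜
    exact max_le ((hDc.trans_le (minCard_le hD')).trans hD'c)
      ((hSc.trans_le (minCard_le hS')).trans hS'c)
end
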